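/- arXiv:1304.3121 — 2 statements merged into one kernel-verified Lean document; each statement's English description precedes it below -/
import Mathlib

section
/- Lower bound on shared boundaries: suppose the net with boundaries N : k → l decomposes as N ≅ N₁ ; N₂ with N₁ : k → n and N₂ : n → l a pure composition, both with nonempty place sets, and let (P₁, P₂) be the induced oriented partition of the places of N. Then n ≥ dim(net(P₁ → P₂)) and n ≥ dim(net(P₂ → P₁)). -/
/-! Core definitions: nets with boundaries (Sobocinski et al.),
composition, tensor, isomorphism, step firing semantics, ports,
connections, networks, bases, wiring expressions and decompositions. -/

namespace NWB

/-- A net with boundaries `N : k → l` (without the contention axioms,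
which are packaged separately in `IsContention`). -/
structure NetB (k l : ℕ) : Type 1 where
  P : Type
  T : Type
  finP : Finite P
  finT : Finite T
  pre : T → Set P
  post : T → Set P
  src : T → Set (Fin k)
  tgt : T → Set (Fin l)
  con : T → T → Prop

/-- The contention relation axioms: reflexive, symmetric, and forced whenever
two transitions share a pre-place, post-place, or boundary port. -/
def IsContention {k l : ℕ} (N : NetB k l) : Prop :=
  (∀ t, N.con t t) ∧ (∀ t u, N.con t u → N.con u t) ∧
  (∀ t u,
    ((N.pre t ∩ N.pre u).Nonempty ∨ (N.post t ∩ N.post u).Nonempty ∨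
     (N.src t ∩ N.src u).Nonempty ∨ (N.tgt t ∩ N.tgt u).Nonempty) → N.con t u)

def setPre {k l : ℕ} (N : NetB k l) (U : Set N.T) : Set N.P := ⋃ u ∈ U, N.pre u
def setPost {k l : ℕ} (N : NetB k l) (U : Set N.T) : Set N.P := ⋃ u ∈ U, N.post u
def setSrc {k l : ℕ} (N : NetB k l) (U : Set N.T) : Set (Fin k) := ⋃ u ∈ U, N.src u
def setTgt {k l : ℕ} (N : NetB k l) (U : Set N.T) : Set (Fin l) := ⋃ u ∈ U, N.tgt u

/-- Mutually independent set of transitions: no two distinct members in contention. -/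
def MI {k l : ℕ} (N : NetB k l) (U : Set N.T) : Prop :=
  ∀ u ∈ U, ∀ v ∈ U, N.con u v → u = v

/-- Contention lifted to sets of transitions. -/
def setCon {k l : ℕ} (N : NetB k l) (U V : Set N.T) : Prop :=
  ∃ u ∈ U, ∃ v ∈ V, N.con u v

/-- A synchronisation between `M : l → m` and `N : m → n`. -/
structure Sync {l m n : ℕ} (M : NetB l m) (N : NetB m n) where
  U : Set M.T
  V : Set N.T
  miU : MI M U
  miV : MI N V
  bd : setTgt M U = setSrc N V

def Sync.Trivial {l m n : ℕ} {M : NetB l m} {N : NetB m n} (s : Sync M N) : Prop :=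
  s.U = ∅ ∧ s.V = ∅

/-- A minimal synchronisation: non-trivial, and every componentwise-smaller
synchronisation is trivial or equal to it. -/
def Sync.Minimal {l m n : ℕ} {M : NetB l m} {N : NetB m n} (s : Sync M N) : Prop :=
  ¬ s.Trivial ∧
  ∀ s' : Sync M N, s'.U ⊆ s.U → s'.V ⊆ s.V → (s'.Trivial ∨ (s'.U = s.U ∧ s'.V = s.V))

theorem sync_finite {l m n : ℕ} (M : NetB l m) (N : NetB m n) : Finite (Sync M N) := by
  haveI := M.finT; haveI := N.finT
  apply Finite.of_injective (fun s : Sync M N => (s.U, s.V))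
  intro s s' h
  simp only [Prod.mk.injEq] at h
  obtain ⟨h1, h2⟩ := h
  cases s; cases s'
  simp_all

/-- Composition along a common boundary. -/
def comp {l m n : ℕ} (M : NetB l m) (N : NetB m n) : NetB l n where
  P := M.P ⊕ N.P
  T := {s : Sync M N // s.Minimal}
  finP := by haveI := M.finP; haveI := N.finP; exact inferInstance
  finT := by haveI := sync_finite M N; exact inferInstance
  pre s := (Sum.inl '' setPre M s.1.U) ∪ (Sum.inr '' setPre N s.1.V)
  post s := (Sum.inl '' setPost M s.1.U) ∪ (Sum.inr '' setPost N s.1.V)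
  src s := setSrc M s.1.U
  tgt s := setTgt N s.1.V
  con s s' := setCon M s.1.U s'.1.U ∨ setCon N s.1.V s'.1.V

/-- Tensor product of nets with boundaries. -/
def tensor {l m k n : ℕ} (M : NetB l m) (N : NetB k n) : NetB (l + k) (m + n) where
  P := M.P ⊕ N.P
  T := M.T ⊕ N.T
  finP := by haveI := M.finP; haveI := N.finP; exact inferInstance
  finT := by haveI := M.finT; haveI := N.finT; exact inferInstance
  pre t := match t with
    | Sum.inl t => Sum.inl '' M.pre t
    | Sum.inr t => Sum.inr '' N.pre t
  post t := match t with
    | Sum.inl t => Sum.inl '' M.post t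
    | Sum.inr t => Sum.inr '' N.post t
  src t := match t with
    | Sum.inl t => Fin.castAdd k '' M.src t
    | Sum.inr t => Fin.natAdd l '' N.src t
  tgt t := match t with
    | Sum.inl t => Fin.castAdd n '' M.tgt t
    | Sum.inr t => Fin.natAdd m '' N.tgt t
  con t u := match t, u with
    | Sum.inl t, Sum.inl u => M.con t u
    | Sum.inr t, Sum.inr u => N.con t u
    | _, _ => False

/-- Isomorphism of nets with boundaries: bijections on places and transitions
preserving pre-sets, post-sets, boundary maps and contention. -/
structure NetIso {k l : ℕ} (M N : NetB k l) where
  ep : M.P ≃ N.P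
  et : M.T ≃ N.T
  pre_eq : ∀ t, N.pre (et t) = ep '' M.pre t
  post_eq : ∀ t, N.post (et t) = ep '' M.post t
  src_eq : ∀ t, N.src (et t) = M.src t
  tgt_eq : ∀ t, N.tgt (et t) = M.tgt t
  con_iff : ∀ t u, N.con (et t) (et u) ↔ M.con t u

def Iso {k l : ℕ} (M N : NetB k l) : Prop := Nonempty (NetIso M N)

/-- Transport a net along equalities of its boundary sizes. -/
def castNet {k l k' l' : ℕ} (h1 : k = k') (h2 : l = l') (N : NetB k l) : NetB k' l' where
  P := N.P
  T := N.T
  finP := N.finP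
  finT := N.finT
  pre := N.pre
  post := N.post
  src t := Fin.cast h1 '' N.src t
  tgt t := Fin.cast h2 '' N.tgt t
  con := N.con

def emptyNet : NetB 0 0 where
  P := Empty
  T := Empty
  finP := inferInstance
  finT := inferInstance
  pre t := t.elim
  post t := t.elim
  src t := t.elim
  tgt t := t.elim
  con t _ := t.elim

/-- The step firing semantics: `Fires N X X' α β` iff the LTS `⟦N⟧` has a
transition `X →⟨α,β⟩ X'`. -/
def Fires {k l : ℕ} (N : NetB k l) (X X' : Set N.P) (α : Set (Fin k)) (β : Set (Fin l)) :
    Prop :=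
  ∃ U : Set N.T, MI N U ∧ setPre N U ⊆ X ∧ setPost N U ∩ X = ∅ ∧
    X' = (X \ setPre N U) ∪ setPost N U ∧ setSrc N U = α ∧ setTgt N U = β

/-! ### Ports, connections and networks -/

/-- The ports of a net: an in-port and an out-port for each place,
together with the left and right boundary ports. -/
def Port {k l : ℕ} (N : NetB k l) : Type := (N.P ⊕ N.P) ⊕ (Fin k ⊕ Fin l)

def portIn {k l : ℕ} {N : NetB k l} (p : N.P) : Port N := Sum.inl (Sum.inl p)
def portOut {k l : ℕ} {N : NetB k l} (p : N.P) : Port N := Sum.inl (Sum.inr p)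
def bLeft {k l : ℕ} {N : NetB k l} (i : Fin k) : Port N := Sum.inr (Sum.inl i)
def bRight {k l : ℕ} {N : NetB k l} (j : Fin l) : Port N := Sum.inr (Sum.inr j)

/-- The portset of a transition. -/
def tports {k l : ℕ} (N : NetB k l) (t : N.T) : Set (Port N) :=
  (portOut '' N.pre t) ∪ (portIn '' N.post t) ∪ (bLeft '' N.src t) ∪ (bRight '' N.tgt t)

/-- The connection of a port `q`: the portsets (minus `q`) of all transitions
properly connecting to `q`. -/
def conn {k l : ℕ} (N : NetB k l) (q : Port N) : Set (Set (Port N)) :=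
  { K | ∃ t : N.T, {q} ⊂ tports N t ∧ K = tports N t \ {q} }

/-- The connection of `q` restricted to a set `R` of ports. -/
def connR {k l : ℕ} (N : NetB k l) (R : Set (Port N)) (q : Port N) :
    Set (Set (Port N)) :=
  { K' | ∃ K ∈ conn N q, (K ∩ R).Nonempty ∧ K' = K ∩ R }

/-- Extended ports of the left part of an oriented partition. -/
def eportsL {k l : ℕ} (N : NetB k l) (Pl : Set N.P) : Set (Port N) :=
  (portIn '' Pl) ∪ (portOut '' Pl) ∪ Set.range (bLeft (N := N))

/-- Extended ports of the right part of an oriented partition. -/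
def eportsR {k l : ℕ} (N : NetB k l) (Pr : Set N.P) : Set (Port N) :=
  (portIn '' Pr) ∪ (portOut '' Pr) ∪ Set.range (bRight (N := N))

/-- The network `net(P_l → P_r)`. -/
def networkLR {k l : ℕ} (N : NetB k l) (Pl Pr : Set N.P) :
    Set (Set (Set (Port N))) :=
  { c | ∃ q ∈ eportsL N Pl, c = connR N (eportsR N Pr) q }

/-- The network `net(P_r → P_l)`. -/
def networkRL {k l : ℕ} (N : NetB k l) (Pl Pr : Set N.P) :
    Set (Set (Set (Port N))) :=
  { c | ∃ q ∈ eportsR N Pr, c = connR N (eportsL N Pl) q }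

/-- `b` is a basis of the network `M`: every connection in `M` is a union of
basis connections. -/
def IsBasis {C : Type} {m : ℕ} (b : Fin m → Set C) (M : Set (Set C)) : Prop :=
  ∀ c ∈ M, ∃ S : Finset (Fin m), c = ⋃ i ∈ S, b i

/-- The dimension of a network: the size of its smallest basis. -/
noncomputable def netDim {C : Type} (M : Set (Set C)) : ℕ :=
  sInf { m | ∃ b : Fin m → Set C, IsBasis b M }

/-- Purity of a composition `N_l ; N_r`: no transition of either component
connects to two different shared boundary ports. -/
def Pure {k n l : ℕ} (Nl : NetB k n) (Nr : NetB n l) : Prop :=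
  (∀ j : Fin n, ∀ K ∈ conn Nl (bRight j), ∀ i : Fin n, bRight i ∉ K) ∧
  (∀ j : Fin n, ∀ K ∈ conn Nr (bLeft j), ∀ i : Fin n, bLeft i ∉ K)

/-! ### Wiring expressions and decompositions -/

/-- Nets with boundaries of arbitrary boundary sizes. -/
def NetS : Type 1 := Σ (k : ℕ) (l : ℕ), NetB k l

/-- Composition on `NetS` (junk value on boundary mismatch). -/
def seqS (X Y : NetS) : NetS :=
  if h : X.2.1 = Y.1 then ⟨X.1, Y.2.1, comp (castNet rfl h X.2.2) Y.2.2⟩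
  else ⟨0, 0, emptyNet⟩

def tenS (X Y : NetS) : NetS := ⟨X.1 + Y.1, X.2.1 + Y.2.1, tensor X.2.2 Y.2.2⟩

/-- Wiring expressions: binary trees with `;` and `⊗` nodes and variables at
the leaves. -/
inductive WExpr (V : Type) : Type
  | leaf : V → WExpr V
  | seq : WExpr V → WExpr V → WExpr V
  | ten : WExpr V → WExpr V → WExpr V

/-- Semantics of a wiring expression under a variable assignment. -/
def sem {V : Type} (A : V → NetS) : WExpr V → NetS
  | .leaf x => A x
  | .seq t₁ t₂ => seqS (sem A t₁) (sem A t₂)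
  | .ten t₁ t₂ => tenS (sem A t₁) (sem A t₂)

/-- Compatibility of an assignment with an expression: at each `;` node the
shared boundaries match. -/
def WT {V : Type} (A : V → NetS) : WExpr V → Prop
  | .leaf _ => True
  | .seq t₁ t₂ => WT A t₁ ∧ WT A t₂ ∧ (sem A t₁).2.1 = (sem A t₂).1
  | .ten t₁ t₂ => WT A t₁ ∧ WT A t₂

/-- The wiring decomposition `(t, A)` has width `w`: every leaf net has
boundaries and number of places `≤ w`, and every subexpression has
boundaries `≤ w`. -/
def HasWidth {V : Type} (A : V → NetS) (w : ℕ) : WExpr V → Prop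
  | .leaf x => (A x).1 ≤ w ∧ Nat.card (A x).2.2.P ≤ w ∧ (A x).2.1 ≤ w
  | .seq t₁ t₂ => HasWidth A w t₁ ∧ HasWidth A w t₂ ∧
      (sem A (.seq t₁ t₂)).1 ≤ w ∧ (sem A (.seq t₁ t₂)).2.1 ≤ w
  | .ten t₁ t₂ => HasWidth A w t₁ ∧ HasWidth A w t₂ ∧
      (sem A (.ten t₁ t₂)).1 ≤ w ∧ (sem A (.ten t₁ t₂)).2.1 ≤ w

/-- `(t, A)` is a wiring decomposition of `N : k → l`: the assignment maps
variables to genuine nets with boundaries, is compatible with `t`, and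
`⟦t⟧_A ≅ N`. -/
def IsDecompOf {V : Type} {k l : ℕ} (A : V → NetS) (t : WExpr V) (N : NetB k l) : Prop :=
  (∀ x, IsContention (A x).2.2) ∧ WT A t ∧
  ∃ (h1 : (sem A t).1 = k) (h2 : (sem A t).2.1 = l),
    Iso (castNet h1 h2 (sem A t).2.2) N

/-- A net has decomposition width `w` if it has a wiring decomposition of
width `w`. -/
def HasDecompWidth {k l : ℕ} (N : NetB k l) (w : ℕ) : Prop :=
  ∃ (Var : Type) (A : Var → NetS) (t : WExpr Var),
    IsDecompOf A t N ∧ HasWidth A w t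

/-- A pure wiring decomposition: at every `;` node the composition of the two
subexpression nets is pure. -/
def PureExpr {V : Type} (A : V → NetS) : WExpr V → Prop
  | .leaf _ => True
  | .seq t₁ t₂ => PureExpr A t₁ ∧ PureExpr A t₂ ∧
      ∀ (h : (sem A t₁).2.1 = (sem A t₂).1),
        Pure (castNet rfl h (sem A t₁).2.2) (sem A t₂).2.2
  | .ten t₁ t₂ => PureExpr A t₁ ∧ PureExpr A t₂

/-- One step of reassociation of `;` or `⊗`, anywhere inside an expression. -/
inductive AssocStep {V : Type} : WExpr V → WExpr V → Prop
  | seqAssoc (a b c : WExpr V) : AssocStep (.seq (.seq a b) c) (.seq a (.seq b c))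
  | tenAssoc (a b c : WExpr V) : AssocStep (.ten (.ten a b) c) (.ten a (.ten b c))
  | seqCongrL {a a' : WExpr V} (b : WExpr V) :
      AssocStep a a' → AssocStep (.seq a b) (.seq a' b)
  | seqCongrR (a : WExpr V) {b b' : WExpr V} :
      AssocStep b b' → AssocStep (.seq a b) (.seq a b')
  | tenCongrL {a a' : WExpr V} (b : WExpr V) :
      AssocStep a a' → AssocStep (.ten a b) (.ten a' b)
  | tenCongrR (a : WExpr V) {b b' : WExpr V} :
      AssocStep b b' → AssocStep (.ten a b) (.ten a b')

/-- Equivalence of wiring expressions up to associativity of `;` and `⊗`. -/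
def AssocEquiv {V : Type} : WExpr V → WExpr V → Prop := Relation.EqvGen AssocStep

/-! ### Concrete families of nets -/

/-- The clique net `C_n : 0 → 0`, with the minimal contention relation. -/
def clique (n : ℕ) : NetB 0 0 where
  P := Fin n
  T := {p : Fin n × Fin n // p.1 ≠ p.2}
  finP := inferInstance
  finT := inferInstance
  pre t := {t.1.1}
  post t := {t.1.2}
  src _ := ∅
  tgt _ := ∅
  con t u := t.1.1 = u.1.1 ∨ t.1.2 = u.1.2

/-- The subset net `P_n : 0 → 0`: a place `S` (= `none`), places `[n]`, and for
each `A ⊆ [n]` a transition `S → A`; the minimal contention relation is total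
since all pre-sets are `{S}`. -/
def subsetNet (n : ℕ) : NetB 0 0 where
  P := Option (Fin n)
  T := Set (Fin n)
  finP := inferInstance
  finT := inferInstance
  pre _ := {none}
  post A := some '' A
  src _ := ∅
  tgt _ := ∅
  con _ _ := True

/-- The tree net `T_Δ^{n,k} : 0 → 0`: places are nodes of the complete n-ary
tree of depth k (lists over `Fin n` of length ≤ k); each non-leaf node has a
single transition to the set of its n children. The minimal contention
relation is equality. -/
def treeD (n k : ℕ) : NetB 0 0 where
  P := {l : List (Fin n) // l.length ≤ k}
  T := {l : List (Fin n) // l.length < k}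
  finP := (List.finite_length_le (Fin n) k).to_subtype
  finT := (List.finite_length_lt (Fin n) k).to_subtype
  pre t := {⟨t.1, t.2.le⟩}
  post t := {p | ∃ i : Fin n, p.1 = t.1 ++ [i]}
  src _ := ∅
  tgt _ := ∅
  con t u := t = u

/-- The tree net `T_Λ^{n,k} : 0 → 0`: as `T_Δ^{n,k}` but with a separate
transition from each non-leaf node to each of its children. The minimal
contention relation relates transitions with the same parent node. -/
def treeL (n k : ℕ) : NetB 0 0 where
  P := {l : List (Fin n) // l.length ≤ k}
  T := {l : List (Fin n) // l.length < k} × Fin n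
  finP := (List.finite_length_le (Fin n) k).to_subtype
  finT := by
    haveI : Finite {l : List (Fin n) // l.length < k} :=
      (List.finite_length_lt (Fin n) k).to_subtype
    exact inferInstance
  pre t := {⟨t.1.1, t.1.2.le⟩}
  post t := {p | p.1 = t.1.1 ++ [t.2]}
  src _ := ∅
  tgt _ := ∅
  con t u := t.1 = u.1

/-- The grid net `G_n : 0 → 0`: places `[n] × [n]`, a transition from each
place to its right neighbour and to its lower neighbour; the minimal
contention relation relates transitions sharing a pre-place or post-place. -/
def grid (n : ℕ) : NetB 0 0 where
  P := Fin n × Fin n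
  T := {e : (Fin n × Fin n) × (Fin n × Fin n) //
        (e.2.1 = e.1.1 ∧ (e.2.2 : ℕ) = (e.1.2 : ℕ) + 1) ∨
        ((e.2.1 : ℕ) = (e.1.1 : ℕ) + 1 ∧ e.2.2 = e.1.2)}
  finP := inferInstance
  finT := inferInstance
  pre e := {e.1.1}
  post e := {e.1.2}
  src _ := ∅
  tgt _ := ∅
  con t u := t.1.1 = u.1.1 ∨ t.1.2 = u.1.2

end NWB

namespace NWB

variable {k n l : ℕ}

/-- Transport of a portset of `N_r` to a portset of `N` along the witnessing
isomorphism: place ports go via the isomorphism (and the right injection),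
right boundary ports of `N_r` are right boundary ports of `N`.  (In a pure
decomposition no other ports occur in the relevant portsets.) -/
def liftSetR (Nl : NetB k n) (Nr : NetB n l) (N : NetB k l)
    (iso : NetIso (comp Nl Nr) N) (K : Set (Port Nr)) : Set (Port N) :=
  { q | (∃ p : Nr.P, portIn p ∈ K ∧ q = portIn (iso.ep (Sum.inr p))) ∨
        (∃ p : Nr.P, portOut p ∈ K ∧ q = portOut (iso.ep (Sum.inr p))) ∨
        (∃ j : Fin l, bRight j ∈ K ∧ q = bRight j) }

/-- Transport of a portset of `N_l` to a portset of `N`, symmetrically. -/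
def liftSetL (Nl : NetB k n) (Nr : NetB n l) (N : NetB k l)
    (iso : NetIso (comp Nl Nr) N) (K : Set (Port Nl)) : Set (Port N) :=
  { q | (∃ p : Nl.P, portIn p ∈ K ∧ q = portIn (iso.ep (Sum.inl p))) ∨
        (∃ p : Nl.P, portOut p ∈ K ∧ q = portOut (iso.ep (Sum.inl p))) ∨
        (∃ i : Fin k, bLeft i ∈ K ∧ q = bLeft i) }

/-- `bconn^{N_r}(i)`, the connection of the shared boundary port `i` computed
in `N_r`, viewed as a connection of `N`. -/
def bconnR (Nl : NetB k n) (Nr : NetB n l) (N : NetB k l)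
    (iso : NetIso (comp Nl Nr) N) (i : Fin n) : Set (Set (Port N)) :=
  liftSetR Nl Nr N iso '' conn Nr (bLeft i)

/-- `bconn^{N_l}(i)`, the connection of the shared boundary port `i` computed
in `N_l`, viewed as a connection of `N`. -/
def bconnL (Nl : NetB k n) (Nr : NetB n l) (N : NetB k l)
    (iso : NetIso (comp Nl Nr) N) (i : Fin n) : Set (Set (Port N)) :=
  liftSetL Nl Nr N iso '' conn Nl (bRight i)

/-- The left part of the oriented partition of the places of `N` induced by
the witnessing isomorphism. -/
def partL (Nl : NetB k n) (Nr : NetB n l) (N : NetB k l)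
    (iso : NetIso (comp Nl Nr) N) : Set N.P :=
  Set.range (fun p : Nl.P => iso.ep (Sum.inl p))

/-- The right part of the induced oriented partition. -/
def partR (Nl : NetB k n) (Nr : NetB n l) (N : NetB k l)
    (iso : NetIso (comp Nl Nr) N) : Set N.P :=
  Set.range (fun p : Nr.P => iso.ep (Sum.inr p))

end NWB

/-!
Purity lets each transition of `N₁` reach at most one shared boundary port, and likewise each
transition of `N₂`. Hence a minimal synchronisation using both components is a single pair
`(u, v)` glued along one port `i`, whose portset is that of `u` on the left and that of `v` on
the right. So for a port `q` on the `P₁` side, the `P₂`-traces of the transitions through `q` are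
exactly the members of `bconn^{N₂}(i)` for the ports `i` that `q` reaches inside `N₁`: the `n`
connections `bconn^{N₂}(i)` form a basis of `net(P₁ → P₂)`, and dually for `net(P₂ → P₁)`.
-/

namespace NWB

section Basic

variable {k l : ℕ} {N : NetB k l}

@[simp] lemma portOut_mem_tports {t : N.T} {p : N.P} : portOut p ∈ tports N t ↔ p ∈ N.pre t := by
  simp only [tports, Set.mem_union, Set.mem_image]
  simp [Port, portIn, portOut, bLeft, bRight]

@[simp] lemma portIn_mem_tports {t : N.T} {p : N.P} : portIn p ∈ tports N t ↔ p ∈ N.post t := by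
  simp only [tports, Set.mem_union, Set.mem_image]
  simp [Port, portIn, portOut, bLeft, bRight]

@[simp] lemma bLeft_mem_tports {t : N.T} {i : Fin k} : bLeft i ∈ tports N t ↔ i ∈ N.src t := by
  simp only [tports, Set.mem_union, Set.mem_image]
  simp [Port, portIn, portOut, bLeft, bRight]

@[simp] lemma bRight_mem_tports {t : N.T} {j : Fin l} : bRight j ∈ tports N t ↔ j ∈ N.tgt t := by
  simp only [tports, Set.mem_union, Set.mem_image]
  simp [Port, portIn, portOut, bLeft, bRight]

lemma disjoint_eportsL_eportsR {Pl Pr : Set N.P} (h : Disjoint Pl Pr) :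
    Disjoint (eportsL N Pl) (eportsR N Pr) := by
  rw [Set.disjoint_left]
  rintro _ ((⟨p, hp, rfl⟩ | ⟨p, hp, rfl⟩) | ⟨i, rfl⟩)
    ((⟨p', hp', he⟩ | ⟨p', hp', he⟩) | ⟨j, he⟩) <;>
    simp only [Port, portIn, portOut, bLeft, bRight, Sum.inl.injEq, Sum.inr.injEq,
      reduceCtorEq] at he
  all_goals subst he; exact Set.disjoint_left.1 h hp hp'

lemma union_inter_eportsR {Pl Pr : Set N.P} (h : Disjoint Pl Pr)
    {A B : Set (Port N)} (hA : A ⊆ eportsL N Pl) (hB : B ⊆ eportsR N Pr) :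
    (A ∪ B) ∩ eportsR N Pr = B := by
  rw [Set.union_inter_distrib_right, Set.inter_eq_left.2 hB,
    ((disjoint_eportsL_eportsR h).mono_left hA).inter_eq, Set.empty_union]

lemma union_inter_eportsL {Pl Pr : Set N.P} (h : Disjoint Pl Pr)
    {A B : Set (Port N)} (hA : A ⊆ eportsL N Pl) (hB : B ⊆ eportsR N Pr) :
    (A ∪ B) ∩ eportsL N Pl = A := by
  rw [Set.union_inter_distrib_right, Set.inter_eq_left.2 hA,
    ((disjoint_eportsL_eportsR h).symm.mono_left hB).inter_eq, Set.union_empty]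

lemma mi_singleton (t : N.T) : MI N {t} :=
  fun _ ha _ hb _ => ha.trans hb.symm

@[simp] lemma setSrc_empty : setSrc N ∅ = ∅ := Set.biUnion_empty _

@[simp] lemma setTgt_empty : setTgt N ∅ = ∅ := Set.biUnion_empty _

@[simp] lemma setSrc_singleton (t : N.T) : setSrc N {t} = N.src t := Set.biUnion_singleton _ _

@[simp] lemma setTgt_singleton (t : N.T) : setTgt N {t} = N.tgt t := Set.biUnion_singleton _ _

lemma connR_eq_of_notMem {R : Set (Port N)} {q : Port N} (hq : q ∉ R) :
    connR N R q = {K | ∃ t, q ∈ tports N t ∧ (tports N t ∩ R).Nonempty ∧ K = tports N t ∩ R} := by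
  have hdiff : ∀ t, (tports N t \ {q}) ∩ R = tports N t ∩ R := fun t =>
    Set.ext fun x => ⟨fun h => ⟨h.1.1, h.2⟩, fun h => ⟨⟨h.1, fun hx => hq (hx ▸ h.2)⟩, h.2⟩⟩
  ext K
  constructor
  · rintro ⟨_, ⟨t, hqt, rfl⟩, hne, rfl⟩
    rw [hdiff] at hne ⊢
    exact ⟨t, hqt.1 rfl, hne, rfl⟩
  · rintro ⟨t, hqt, ⟨x, hxt, hxR⟩, rfl⟩
    refine ⟨_, ⟨t, ?_, rfl⟩, by rw [hdiff]; exact ⟨x, hxt, hxR⟩, (hdiff t).symm⟩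
    rw [Set.ssubset_iff_of_subset (Set.singleton_subset_iff.2 hqt)]
    exact ⟨x, hxt, fun hx => hq (hx ▸ hxR)⟩

end Basic

lemma netDim_le_of_forall_eq_biUnion {C : Type} {M : Set (Set C)} {m : ℕ} (b : Fin m → Set C)
    (h : ∀ c ∈ M, ∃ S : Set (Fin m), c = ⋃ i ∈ S, b i) : netDim M ≤ m := by
  refine Nat.sInf_le ⟨b, fun c hc => ?_⟩
  classical
  obtain ⟨S, rfl⟩ := h c hc
  exact ⟨S.toFinset, by simp⟩

section PureComposition

variable {k n l : ℕ} {N₁ : NetB k n} {N₂ : NetB n l}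

lemma Pure.tgt_subsingleton (hpure : Pure N₁ N₂) (u : N₁.T) : (N₁.tgt u).Subsingleton := by
  intro i hi j hj
  by_contra hij
  have hji : (bRight j : Port N₁) ∉ ({bRight i} : Set (Port N₁)) := fun h =>
    hij (Sum.inr_injective (Sum.inr_injective h)).symm
  refine hpure.1 i _ ⟨u, ?_, rfl⟩ j ⟨bRight_mem_tports.2 hj, hji⟩
  rw [Set.ssubset_iff_of_subset (Set.singleton_subset_iff.2 (bRight_mem_tports.2 hi))]
  exact ⟨_, bRight_mem_tports.2 hj, hji⟩

lemma Pure.src_subsingleton (hpure : Pure N₁ N₂) (v : N₂.T) : (N₂.src v).Subsingleton := by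
  intro i hi j hj
  by_contra hij
  have hji : (bLeft j : Port N₂) ∉ ({bLeft i} : Set (Port N₂)) := fun h =>
    hij (Sum.inl_injective (Sum.inr_injective h)).symm
  refine hpure.2 i _ ⟨v, ?_, rfl⟩ j ⟨bLeft_mem_tports.2 hj, hji⟩
  rw [Set.ssubset_iff_of_subset (Set.singleton_subset_iff.2 (bLeft_mem_tports.2 hi))]
  exact ⟨_, bLeft_mem_tports.2 hj, hji⟩

lemma Pure.tgt_eq_src (hpure : Pure N₁ N₂) {u : N₁.T} {v : N₂.T} {i : Fin n}
    (hiu : i ∈ N₁.tgt u) (hiv : i ∈ N₂.src v) : N₁.tgt u = N₂.src v := by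
  rw [(hpure.tgt_subsingleton u).eq_singleton_of_mem hiu,
    (hpure.src_subsingleton v).eq_singleton_of_mem hiv]

def pairSync (u : N₁.T) (v : N₂.T) (h : N₁.tgt u = N₂.src v) : Sync N₁ N₂ where
  U := {u}
  V := {v}
  miU := mi_singleton u
  miV := mi_singleton v
  bd := by rwa [setTgt_singleton, setSrc_singleton]

lemma pairSync_minimal {u : N₁.T} {v : N₂.T} (h : N₁.tgt u = N₂.src v)
    (hne : (N₁.tgt u).Nonempty) : (pairSync u v h).Minimal := by
  refine ⟨fun htriv => Set.singleton_ne_empty u htriv.1, fun s hU hV => ?_⟩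
  have hbd := s.bd
  rcases Set.subset_singleton_iff_eq.1 hU with hU | hU <;>
    rcases Set.subset_singleton_iff_eq.1 hV with hV | hV <;>
    rw [hU, hV] at hbd
  · exact Or.inl ⟨hU, hV⟩
  · rw [setTgt_empty, setSrc_singleton, ← h] at hbd
    exact absurd hbd.symm hne.ne_empty
  · rw [setTgt_singleton, setSrc_empty] at hbd
    exact absurd hbd hne.ne_empty
  · exact Or.inr ⟨hU, hV⟩

lemma Sync.Minimal.eq_pair (hpure : Pure N₁ N₂) {s : Sync N₁ N₂} (hs : s.Minimal)
    {u : N₁.T} {v : N₂.T} (hu : u ∈ s.U) (hv : v ∈ s.V) :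
    s.U = {u} ∧ s.V = {v} ∧ ∃ i, i ∈ N₁.tgt u ∧ i ∈ N₂.src v := by
  obtain ⟨i, hi⟩ : (N₂.src v).Nonempty := by
    rw [Set.nonempty_iff_ne_empty]
    intro hsrc
    let s' : Sync N₁ N₂ :=
      ⟨∅, {v}, fun _ h => h.elim, mi_singleton v, by rw [setTgt_empty, setSrc_singleton, hsrc]⟩
    rcases hs.2 s' (Set.empty_subset _) (Set.singleton_subset_iff.2 hv) with htriv | ⟨hU, -⟩
    · exact Set.singleton_ne_empty v htriv.2
    · exact Set.eq_empty_iff_forall_notMem.1 hU.symm u hu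
  have hiU : i ∈ setTgt N₁ s.U := s.bd ▸ Set.mem_biUnion hv hi
  obtain ⟨u', hu', hiu'⟩ := Set.mem_iUnion₂.1 hiU
  rcases hs.2 (pairSync u' v (hpure.tgt_eq_src hiu' hi)) (Set.singleton_subset_iff.2 hu')
      (Set.singleton_subset_iff.2 hv) with htriv | ⟨hU, hV⟩
  · exact absurd htriv.1 (Set.singleton_ne_empty u')
  · obtain rfl : u = u' := by rw [← hU] at hu; exact hu
    exact ⟨hU.symm, hV.symm, i, hiu', hi⟩

end PureComposition

section Decomposition

variable {k n l : ℕ} {N₁ : NetB k n} {N₂ : NetB n l} {N : NetB k l}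
  (iso : NetIso (comp N₁ N₂) N)

lemma disjoint_partL_partR : Disjoint (partL N₁ N₂ N iso) (partR N₁ N₂ N iso) := by
  rw [Set.disjoint_left]
  rintro _ ⟨p, rfl⟩ ⟨p', he⟩
  exact Sum.inr_ne_inl (iso.ep.injective he)

lemma liftSetL_subset_eportsL (K : Set (Port N₁)) :
    liftSetL N₁ N₂ N iso K ⊆ eportsL N (partL N₁ N₂ N iso) := by
  rintro _ (⟨p, -, rfl⟩ | ⟨p, -, rfl⟩ | ⟨i, -, rfl⟩)
  exacts [Or.inl (Or.inl ⟨_, ⟨p, rfl⟩, rfl⟩), Or.inl (Or.inr ⟨_, ⟨p, rfl⟩, rfl⟩), Or.inr ⟨i, rfl⟩]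

lemma liftSetR_subset_eportsR (K : Set (Port N₂)) :
    liftSetR N₁ N₂ N iso K ⊆ eportsR N (partR N₁ N₂ N iso) := by
  rintro _ (⟨p, -, rfl⟩ | ⟨p, -, rfl⟩ | ⟨j, -, rfl⟩)
  exacts [Or.inl (Or.inl ⟨_, ⟨p, rfl⟩, rfl⟩), Or.inl (Or.inr ⟨_, ⟨p, rfl⟩, rfl⟩), Or.inr ⟨j, rfl⟩]

lemma tports_iso_comp (t : (comp N₁ N₂).T) :
    tports N (iso.et t) = (⋃ u ∈ t.1.U, liftSetL N₁ N₂ N iso (tports N₁ u)) ∪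
      ⋃ v ∈ t.1.V, liftSetR N₁ N₂ N iso (tports N₂ v) := by
  rw [tports, iso.pre_eq, iso.post_eq, iso.src_eq, iso.tgt_eq]
  ext x
  simp only [comp, setPre, setPost, setSrc, setTgt, liftSetL, liftSetR, Set.mem_union,
    Set.mem_image, Set.mem_iUnion, Set.mem_ofPred_eq, exists_prop, portIn_mem_tports, portOut_mem_tports,
    bLeft_mem_tports, bRight_mem_tports]
  grind

lemma tports_iso_pairSync {u : N₁.T} {v : N₂.T} (h : N₁.tgt u = N₂.src v)
    (hne : (N₁.tgt u).Nonempty) :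
    tports N (iso.et (⟨pairSync u v h, pairSync_minimal h hne⟩ : (comp N₁ N₂).T)) =
      liftSetL N₁ N₂ N iso (tports N₁ u) ∪ liftSetR N₁ N₂ N iso (tports N₂ v) :=
  (tports_iso_comp iso _).trans
    (congrArg₂ (· ∪ ·) (Set.biUnion_singleton _ _) (Set.biUnion_singleton _ _))

lemma liftSetL_diff_bRight (K : Set (Port N₁)) (i : Fin n) :
    liftSetL N₁ N₂ N iso (K \ {bRight i}) = liftSetL N₁ N₂ N iso K := by
  ext x
  simp only [liftSetL, Set.mem_ofPred_eq, Set.mem_sdiff, Set.mem_singleton_iff]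
  simp [Port, portIn, portOut, bLeft, bRight]

lemma liftSetR_diff_bLeft (K : Set (Port N₂)) (i : Fin n) :
    liftSetR N₁ N₂ N iso (K \ {bLeft i}) = liftSetR N₁ N₂ N iso K := by
  ext x
  simp only [liftSetR, Set.mem_ofPred_eq, Set.mem_sdiff, Set.mem_singleton_iff]
  simp [Port, portIn, portOut, bLeft, bRight]

lemma bRight_ssubset_tports_iff (hpure : Pure N₁ N₂) {u : N₁.T} {i : Fin n} :
    {bRight i} ⊂ tports N₁ u ↔
      i ∈ N₁.tgt u ∧ (liftSetL N₁ N₂ N iso (tports N₁ u)).Nonempty := by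
  constructor
  · intro hlt
    have hi : i ∈ N₁.tgt u := bRight_mem_tports.1 (hlt.1 rfl)
    obtain ⟨x, hx, hxi⟩ := Set.exists_of_ssubset hlt
    refine ⟨hi, ?_⟩
    rcases hx with ((⟨p, hp, rfl⟩ | ⟨p, hp, rfl⟩) | ⟨j, hj, rfl⟩) | ⟨j, hj, rfl⟩
    · exact ⟨_, Or.inr (Or.inl ⟨p, portOut_mem_tports.2 hp, rfl⟩)⟩
    · exact ⟨_, Or.inl ⟨p, portIn_mem_tports.2 hp, rfl⟩⟩
    · exact ⟨_, Or.inr (Or.inr ⟨j, bLeft_mem_tports.2 hj, rfl⟩)⟩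
    · exact absurd (hpure.tgt_subsingleton u hj hi ▸ Set.mem_singleton _) hxi
  · rintro ⟨hi, x, hx⟩
    rw [Set.ssubset_iff_of_subset (Set.singleton_subset_iff.2 (bRight_mem_tports.2 hi))]
    rcases hx with ⟨p, hp, -⟩ | ⟨p, hp, -⟩ | ⟨j, hj, -⟩
    exacts [⟨_, hp, nofun⟩, ⟨_, hp, nofun⟩, ⟨_, hj, nofun⟩]

lemma bLeft_ssubset_tports_iff (hpure : Pure N₁ N₂) {v : N₂.T} {i : Fin n} :
    {bLeft i} ⊂ tports N₂ v ↔
      i ∈ N₂.src v ∧ (liftSetR N₁ N₂ N iso (tports N₂ v)).Nonempty := by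
  constructor
  · intro hlt
    have hi : i ∈ N₂.src v := bLeft_mem_tports.1 (hlt.1 rfl)
    obtain ⟨x, hx, hxi⟩ := Set.exists_of_ssubset hlt
    refine ⟨hi, ?_⟩
    rcases hx with ((⟨p, hp, rfl⟩ | ⟨p, hp, rfl⟩) | ⟨j, hj, rfl⟩) | ⟨j, hj, rfl⟩
    · exact ⟨_, Or.inr (Or.inl ⟨p, portOut_mem_tports.2 hp, rfl⟩)⟩
    · exact ⟨_, Or.inl ⟨p, portIn_mem_tports.2 hp, rfl⟩⟩
    · exact absurd (hpure.src_subsingleton v hj hi ▸ Set.mem_singleton _) hxi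
    · exact ⟨_, Or.inr (Or.inr ⟨j, bRight_mem_tports.2 hj, rfl⟩)⟩
  · rintro ⟨hi, x, hx⟩
    rw [Set.ssubset_iff_of_subset (Set.singleton_subset_iff.2 (bLeft_mem_tports.2 hi))]
    rcases hx with ⟨p, hp, -⟩ | ⟨p, hp, -⟩ | ⟨j, hj, -⟩
    exacts [⟨_, hp, nofun⟩, ⟨_, hp, nofun⟩, ⟨_, hj, nofun⟩]

lemma mem_bconnL_iff (hpure : Pure N₁ N₂) {i : Fin n} {K : Set (Port N)} :
    K ∈ bconnL N₁ N₂ N iso i ↔ ∃ u, i ∈ N₁.tgt u ∧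
      (liftSetL N₁ N₂ N iso (tports N₁ u)).Nonempty ∧ K = liftSetL N₁ N₂ N iso (tports N₁ u) := by
  constructor
  · rintro ⟨_, ⟨u, hlt, rfl⟩, rfl⟩
    obtain ⟨hi, hne⟩ := (bRight_ssubset_tports_iff iso hpure).1 hlt
    exact ⟨u, hi, hne, liftSetL_diff_bRight iso _ i⟩
  · rintro ⟨u, hi, hne, rfl⟩
    exact ⟨_, ⟨u, (bRight_ssubset_tports_iff iso hpure).2 ⟨hi, hne⟩, rfl⟩,
      liftSetL_diff_bRight iso _ i⟩

lemma mem_bconnR_iff (hpure : Pure N₁ N₂) {i : Fin n} {K : Set (Port N)} :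
    K ∈ bconnR N₁ N₂ N iso i ↔ ∃ v, i ∈ N₂.src v ∧
      (liftSetR N₁ N₂ N iso (tports N₂ v)).Nonempty ∧ K = liftSetR N₁ N₂ N iso (tports N₂ v) := by
  constructor
  · rintro ⟨_, ⟨v, hlt, rfl⟩, rfl⟩
    obtain ⟨hi, hne⟩ := (bLeft_ssubset_tports_iff iso hpure).1 hlt
    exact ⟨v, hi, hne, liftSetR_diff_bLeft iso _ i⟩
  · rintro ⟨v, hi, hne, rfl⟩
    exact ⟨_, ⟨v, (bLeft_ssubset_tports_iff iso hpure).2 ⟨hi, hne⟩, rfl⟩,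
      liftSetR_diff_bLeft iso _ i⟩

lemma connR_eportsR_eq (hpure : Pure N₁ N₂) {q : Port N}
    (hq : q ∈ eportsL N (partL N₁ N₂ N iso)) :
    connR N (eportsR N (partR N₁ N₂ N iso)) q =
      ⋃ i ∈ {i | ∃ u, i ∈ N₁.tgt u ∧ q ∈ liftSetL N₁ N₂ N iso (tports N₁ u)},
        bconnR N₁ N₂ N iso i := by
  have hdisj := disjoint_partL_partR iso
  have hqR : q ∉ eportsR N (partR N₁ N₂ N iso) :=
    Set.disjoint_left.1 (disjoint_eportsL_eportsR hdisj) hq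
  rw [connR_eq_of_notMem hqR]
  ext K
  simp only [Set.mem_iUnion, Set.mem_ofPred_eq, exists_prop]
  constructor
  · rintro ⟨_, hqt, hne, rfl⟩
    obtain ⟨t, rfl⟩ := iso.et.surjective ‹N.T›
    have hL := Set.iUnion₂_subset fun u (_ : u ∈ t.1.U) => liftSetL_subset_eportsL iso (tports N₁ u)
    have hR := Set.iUnion₂_subset fun v (_ : v ∈ t.1.V) => liftSetR_subset_eportsR iso (tports N₂ v)
    rw [tports_iso_comp] at hqt hne ⊢
    rw [union_inter_eportsR hdisj hL hR] at hne ⊢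
    obtain ⟨u, hu, hqu⟩ := Set.mem_iUnion₂.1 (hqt.resolve_right fun h => hqR (hR h))
    obtain ⟨v, hv, -⟩ := Set.mem_iUnion₂.1 hne.some_mem
    obtain ⟨-, hV, i, hiu, hiv⟩ := t.2.eq_pair hpure hu hv
    rw [hV, Set.biUnion_singleton] at hne ⊢
    exact ⟨i, ⟨u, hiu, hqu⟩, (mem_bconnR_iff iso hpure).2 ⟨v, hiv, hne, rfl⟩⟩
  · rintro ⟨i, ⟨u, hiu, hqu⟩, hK⟩
    obtain ⟨v, hiv, hne, rfl⟩ := (mem_bconnR_iff iso hpure).1 hK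
    have h := hpure.tgt_eq_src hiu hiv
    refine ⟨iso.et ⟨pairSync u v h, pairSync_minimal h ⟨i, hiu⟩⟩, ?_⟩
    rw [tports_iso_pairSync iso h ⟨i, hiu⟩,
      union_inter_eportsR hdisj (liftSetL_subset_eportsL iso _) (liftSetR_subset_eportsR iso _)]
    exact ⟨Or.inl hqu, hne, rfl⟩

lemma connR_eportsL_eq (hpure : Pure N₁ N₂) {q : Port N}
    (hq : q ∈ eportsR N (partR N₁ N₂ N iso)) :
    connR N (eportsL N (partL N₁ N₂ N iso)) q =
      ⋃ i ∈ {i | ∃ v, i ∈ N₂.src v ∧ q ∈ liftSetR N₁ N₂ N iso (tports N₂ v)},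
        bconnL N₁ N₂ N iso i := by
  have hdisj := disjoint_partL_partR iso
  have hqL : q ∉ eportsL N (partL N₁ N₂ N iso) :=
    Set.disjoint_right.1 (disjoint_eportsL_eportsR hdisj) hq
  rw [connR_eq_of_notMem hqL]
  ext K
  simp only [Set.mem_iUnion, Set.mem_ofPred_eq, exists_prop]
  constructor
  · rintro ⟨_, hqt, hne, rfl⟩
    obtain ⟨t, rfl⟩ := iso.et.surjective ‹N.T›
    have hL := Set.iUnion₂_subset fun u (_ : u ∈ t.1.U) => liftSetL_subset_eportsL iso (tports N₁ u)
    have hR := Set.iUnion₂_subset fun v (_ : v ∈ t.1.V) => liftSetR_subset_eportsR iso (tports N₂ v)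
    rw [tports_iso_comp] at hqt hne ⊢
    rw [union_inter_eportsL hdisj hL hR] at hne ⊢
    obtain ⟨v, hv, hqv⟩ := Set.mem_iUnion₂.1 (hqt.resolve_left fun h => hqL (hL h))
    obtain ⟨u, hu, -⟩ := Set.mem_iUnion₂.1 hne.some_mem
    obtain ⟨hU, -, i, hiu, hiv⟩ := t.2.eq_pair hpure hu hv
    rw [hU, Set.biUnion_singleton] at hne ⊢
    exact ⟨i, ⟨v, hiv, hqv⟩, (mem_bconnL_iff iso hpure).2 ⟨u, hiu, hne, rfl⟩⟩
  · rintro ⟨i, ⟨v, hiv, hqv⟩, hK⟩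
    obtain ⟨u, hiu, hne, rfl⟩ := (mem_bconnL_iff iso hpure).1 hK
    have h := hpure.tgt_eq_src hiu hiv
    refine ⟨iso.et ⟨pairSync u v h, pairSync_minimal h ⟨i, hiu⟩⟩, ?_⟩
    rw [tports_iso_pairSync iso h ⟨i, hiu⟩,
      union_inter_eportsL hdisj (liftSetL_subset_eportsL iso _) (liftSetR_subset_eportsR iso _)]
    exact ⟨Or.inr hqv, hne, rfl⟩

end Decomposition

theorem boundary_dimension_lower_bound_general {k n l : ℕ}
    (N₁ : NetB k n) (N₂ : NetB n l) (N : NetB k l)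
    (iso : NetIso (comp N₁ N₂) N) (hpure : Pure N₁ N₂) :
    netDim (networkLR N (partL N₁ N₂ N iso) (partR N₁ N₂ N iso)) ≤ n ∧
    netDim (networkRL N (partL N₁ N₂ N iso) (partR N₁ N₂ N iso)) ≤ n := by
  constructor
  · refine netDim_le_of_forall_eq_biUnion (bconnR N₁ N₂ N iso) ?_
    rintro _ ⟨q, hq, rfl⟩
    exact ⟨_, connR_eportsR_eq iso hpure hq⟩
  · refine netDim_le_of_forall_eq_biUnion (bconnL N₁ N₂ N iso) ?_
    rintro _ ⟨q, hq, rfl⟩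
    exact ⟨_, connR_eportsL_eq iso hpure hq⟩

/-- Lower bound on shared boundaries.  If the net with
boundaries `N : k → l` decomposes as `N ≅ N₁ ; N₂` with `N₁ : k → n`,
`N₂ : n → l`, a pure composition, both components having nonempty place
sets, and `(P₁, P₂)` is the induced oriented partition of the places of `N`,
then `n ≥ dim(net(P₁ → P₂))` and `n ≥ dim(net(P₂ → P₁))`. -/
theorem boundary_dimension_lower_bound {k n l : ℕ}
    (N₁ : NetB k n) (N₂ : NetB n l) (N : NetB k l)
    (hN₁ : IsContention N₁) (hN₂ : IsContention N₂) (hN : IsContention N)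
    (hP₁ : Nonempty N₁.P) (hP₂ : Nonempty N₂.P)
    (iso : NetIso (comp N₁ N₂) N) (hpure : Pure N₁ N₂) :
    netDim (networkLR N (partL N₁ N₂ N iso) (partR N₁ N₂ N iso)) ≤ n ∧
    netDim (networkRL N (partL N₁ N₂ N iso) (partR N₁ N₂ N iso)) ≤ n :=
  boundary_dimension_lower_bound_general N₁ N₂ N iso hpure

end NWB
end

section
/- Composition along a common boundary of nets with boundaries is associative up to isomorphism: for all nets with boundaries M : k → l, N : l → m, O : m → n, one has (M ; N) ; O ≅ M ; (N ; O). -/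
/-! A mutually independent set of transitions of `A ; B` flattens, by taking unions of
components, to a synchronisation of `A` and `B`, and this is an order isomorphism onto all
synchronisations. Inside a mutually independent set, boundary sets commute with `∩` and `\`
(two transitions sharing a port contend, hence coincide), so a minimal synchronisation either
misses another synchronisation or lies below it. Hence the minimal synchronisations below `s`
are independent, and they cover `s`: the uncovered rest of `s` is again a synchronisation, and
it has no atom below it. Consequently synchronisations of `M ; N` with `O` and of `M` with
`N ; O` are both order isomorphic to triples `(U, V, W)` synchronised along both inner
boundaries, so the transitions of either side are the atoms of the same order; this
correspondence respects all the structure, with places reassociated. -/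

namespace NWB

theorem IsContention.con_of_src {k l : ℕ} {A : NetB k l} (hA : IsContention A) {t u : A.T}
    (h : (A.src t ∩ A.src u).Nonempty) : A.con t u :=
  hA.2.2 t u (Or.inr (Or.inr (Or.inl h)))

theorem IsContention.con_of_tgt {k l : ℕ} {A : NetB k l} (hA : IsContention A) {t u : A.T}
    (h : (A.tgt t ∩ A.tgt u).Nonempty) : A.con t u :=
  hA.2.2 t u (Or.inr (Or.inr (Or.inr h)))

theorem MI.mono {k l : ℕ} {A : NetB k l} {U V : Set A.T} (h : MI A V) (hUV : U ⊆ V) :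
    MI A U := fun u hu v hv hc => h u (hUV hu) v (hUV hv) hc

section BiUnion

theorem biUnion_biUnion {ι α β : Type*} (S : Set ι) (g : ι → Set α) (f : α → Set β) :
    ⋃ x ∈ ⋃ i ∈ S, g i, f x = ⋃ i ∈ S, ⋃ x ∈ g i, f x := by
  ext y
  simp only [Set.mem_iUnion, exists_prop]
  exact ⟨fun ⟨x, ⟨i, hi, hx⟩, hy⟩ => ⟨i, hi, x, hx, hy⟩,
    fun ⟨i, hi, x, hx, hy⟩ => ⟨x, ⟨i, hi, hx⟩, hy⟩⟩

variable {T X : Type*} {f : T → Set X} {U V : Set T}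

theorem biUnion_inter_of_eq
    (h : ∀ u ∈ U, ∀ v ∈ V, (f u ∩ f v).Nonempty → u = v) :
    ⋃ t ∈ U ∩ V, f t = (⋃ t ∈ U, f t) ∩ ⋃ t ∈ V, f t := by
  ext x
  simp only [Set.mem_iUnion, Set.mem_inter_iff, exists_prop]
  constructor
  · rintro ⟨t, ⟨htU, htV⟩, hx⟩
    exact ⟨⟨t, htU, hx⟩, t, htV, hx⟩
  · rintro ⟨⟨u, hu, hxu⟩, v, hv, hxv⟩
    obtain rfl := h u hu v hv ⟨x, hxu, hxv⟩
    exact ⟨u, ⟨hu, hv⟩, hxu⟩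

theorem biUnion_diff_of_eq
    (h : ∀ u ∈ U, ∀ v ∈ V, (f u ∩ f v).Nonempty → u = v) :
    ⋃ t ∈ U \ V, f t = (⋃ t ∈ U, f t) \ ⋃ t ∈ V, f t := by
  ext x
  simp only [Set.mem_iUnion, Set.mem_sdiff, exists_prop, not_exists, not_and]
  constructor
  · rintro ⟨u, ⟨hu, huV⟩, hx⟩
    refine ⟨⟨u, hu, hx⟩, fun v hv hxv => huV ?_⟩
    rwa [h u hu v hv ⟨x, hx, hxv⟩]
  · rintro ⟨⟨u, hu, hx⟩, hxV⟩
    exact ⟨u, ⟨hu, fun huV => hxV u huV hx⟩, hx⟩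

end BiUnion

section Boundary

variable {k l : ℕ} {A : NetB k l} {U V : Set A.T}

theorem setSrc_inter (hA : IsContention A) (hUV : MI A (U ∪ V)) :
    setSrc A (U ∩ V) = setSrc A U ∩ setSrc A V :=
  biUnion_inter_of_eq fun u hu v hv h => hUV u (.inl hu) v (.inr hv) (hA.con_of_src h)

theorem setTgt_inter (hA : IsContention A) (hUV : MI A (U ∪ V)) :
    setTgt A (U ∩ V) = setTgt A U ∩ setTgt A V :=
  biUnion_inter_of_eq fun u hu v hv h => hUV u (.inl hu) v (.inr hv) (hA.con_of_tgt h)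

theorem setSrc_diff (hA : IsContention A) (hUV : MI A (U ∪ V)) :
    setSrc A (U \ V) = setSrc A U \ setSrc A V :=
  biUnion_diff_of_eq fun u hu v hv h => hUV u (.inl hu) v (.inr hv) (hA.con_of_src h)

theorem setTgt_diff (hA : IsContention A) (hUV : MI A (U ∪ V)) :
    setTgt A (U \ V) = setTgt A U \ setTgt A V :=
  biUnion_diff_of_eq fun u hu v hv h => hUV u (.inl hu) v (.inr hv) (hA.con_of_tgt h)

end Boundary

namespace Sync

variable {a b c : ℕ} {A : NetB a b} {B : NetB b c}

@[ext]
theorem ext {s s' : Sync A B} (hU : s.U = s'.U) (hV : s.V = s'.V) : s = s' := by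
  cases s; cases s'; simp_all

instance : PartialOrder (Sync A B) :=
  PartialOrder.lift (fun s => (s.U, s.V)) fun _ _ h =>
    Sync.ext (congrArg Prod.fst h) (congrArg Prod.snd h)

instance : OrderBot (Sync A B) where
  bot := ⟨∅, ∅, fun _ h => h.elim, fun _ h => h.elim, by simp [setTgt, setSrc]⟩
  bot_le s := ⟨Set.empty_subset _, Set.empty_subset _⟩

theorem trivial_iff_eq_bot {s : Sync A B} : s.Trivial ↔ s = ⊥ :=
  ⟨fun h => Sync.ext h.1 h.2, fun h => h ▸ ⟨rfl, rfl⟩⟩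

theorem minimal_iff_isAtom {s : Sync A B} : s.Minimal ↔ IsAtom s := by
  refine and_congr (not_congr trivial_iff_eq_bot) ⟨fun h x hx => ?_, fun h x hU hV => ?_⟩
  · refine trivial_iff_eq_bot.mp ((h x hx.le.1 hx.le.2).resolve_right fun he => ?_)
    exact hx.ne (Sync.ext he.1 he.2)
  · rcases (show x ≤ s from ⟨hU, hV⟩).lt_or_eq with hlt | rfl
    · exact .inl (trivial_iff_eq_bot.mpr (h x hlt))
    · exact .inr ⟨rfl, rfl⟩

instance : Finite (Sync A B) := sync_finite A B

theorem Minimal.eq_of_le {p q : Sync A B} (hp : p.Minimal)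
    (hq : q.Minimal) (h : p ≤ q) : p = q :=
  ((minimal_iff_isAtom.mp hq).le_iff.mp h).resolve_left (minimal_iff_isAtom.mp hp).1

theorem Minimal.disjoint_or_le (hA : IsContention A) (hB : IsContention B) {p s : Sync A B}
    (hp : p.Minimal) (hU : MI A (p.U ∪ s.U)) (hV : MI B (p.V ∪ s.V)) :
    (Disjoint p.U s.U ∧ Disjoint p.V s.V) ∨ p ≤ s := by
  let q : Sync A B := ⟨p.U ∩ s.U, p.V ∩ s.V, p.miU.mono Set.inter_subset_left,
    p.miV.mono Set.inter_subset_left, by rw [setTgt_inter hA hU, setSrc_inter hB hV, p.bd, s.bd]⟩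
  refine (hp.2 q Set.inter_subset_left Set.inter_subset_left).imp (fun h => ?_) (fun h => ?_)
  · exact ⟨Set.disjoint_iff_inter_eq_empty.mpr h.1, Set.disjoint_iff_inter_eq_empty.mpr h.2⟩
  · exact ⟨Set.inter_eq_left.mp h.1, Set.inter_eq_left.mp h.2⟩

end Sync

section Composite

variable {a b c : ℕ} {A : NetB a b} {B : NetB b c}

def unionU (S : Set (comp A B).T) : Set A.T := ⋃ p ∈ S, p.1.U

def unionV (S : Set (comp A B).T) : Set B.T := ⋃ p ∈ S, p.1.V

theorem setSrc_comp (S : Set (comp A B).T) : setSrc (comp A B) S = setSrc A (unionU S) :=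
  (biUnion_biUnion S _ A.src).symm

theorem setTgt_comp (S : Set (comp A B).T) : setTgt (comp A B) S = setTgt B (unionV S) :=
  (biUnion_biUnion S _ B.tgt).symm

theorem setPre_comp (S : Set (comp A B).T) :
    setPre (comp A B) S = Sum.inl '' setPre A (unionU S) ∪ Sum.inr '' setPre B (unionV S) := by
  rw [setPre, setPre, setPre, unionU, unionV, biUnion_biUnion, biUnion_biUnion,
    Set.image_iUnion₂, Set.image_iUnion₂]
  simp only [← Set.iUnion_union_distrib]
  rfl

theorem setPost_comp (S : Set (comp A B).T) :
    setPost (comp A B) S = Sum.inl '' setPost A (unionU S) ∪ Sum.inr '' setPost B (unionV S) := by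
  rw [setPost, setPost, setPost, unionU, unionV, biUnion_biUnion, biUnion_biUnion,
    Set.image_iUnion₂, Set.image_iUnion₂]
  simp only [← Set.iUnion_union_distrib]
  rfl

theorem setCon_comp (S S' : Set (comp A B).T) :
    setCon (comp A B) S S' ↔
      setCon A (unionU S) (unionU S') ∨ setCon B (unionV S) (unionV S') := by
  simp only [setCon, unionU, unionV, Set.mem_iUnion, exists_prop]
  constructor
  · rintro ⟨p, hp, q, hq, ⟨u, hu, u', hu', h⟩ | ⟨v, hv, v', hv', h⟩⟩
    · exact .inl ⟨u, ⟨p, hp, hu⟩, u', ⟨q, hq, hu'⟩, h⟩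
    · exact .inr ⟨v, ⟨p, hp, hv⟩, v', ⟨q, hq, hv'⟩, h⟩
  · rintro (⟨u, ⟨p, hp, hu⟩, u', ⟨q, hq, hu'⟩, h⟩ |
        ⟨v, ⟨p, hp, hv⟩, v', ⟨q, hq, hv'⟩, h⟩)
    · exact ⟨p, hp, q, hq, .inl ⟨u, hu, u', hu', h⟩⟩
    · exact ⟨p, hp, q, hq, .inr ⟨v, hv, v', hv', h⟩⟩

theorem MI.unionU {S : Set (comp A B).T} (hS : MI (comp A B) S) : MI A (unionU S) := by
  intro u hu v hv hcon
  simp only [NWB.unionU, Set.mem_iUnion, exists_prop] at hu hv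
  obtain ⟨p, hp, hu⟩ := hu
  obtain ⟨q, hq, hv⟩ := hv
  obtain rfl := hS p hp q hq (.inl ⟨u, hu, v, hv, hcon⟩)
  exact p.1.miU u hu v hv hcon

theorem MI.unionV {S : Set (comp A B).T} (hS : MI (comp A B) S) : MI B (unionV S) := by
  intro u hu v hv hcon
  simp only [NWB.unionV, Set.mem_iUnion, exists_prop] at hu hv
  obtain ⟨p, hp, hu⟩ := hu
  obtain ⟨q, hq, hv⟩ := hv
  obtain rfl := hS p hp q hq (.inr ⟨u, hu, v, hv, hcon⟩)
  exact p.1.miV u hu v hv hcon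

theorem setTgt_unionU (S : Set (comp A B).T) : setTgt A (unionU S) = setSrc B (unionV S) := by
  rw [unionU, unionV, setTgt, setSrc, biUnion_biUnion, biUnion_biUnion]
  exact Set.iUnion₂_congr fun p _ => p.1.bd

def flatten (S : Set (comp A B).T) (hS : MI (comp A B) S) : Sync A B :=
  ⟨unionU S, unionV S, hS.unionU, hS.unionV, setTgt_unionU S⟩

theorem le_flatten {S : Set (comp A B).T} (hS : MI (comp A B) S) {p : (comp A B).T}
    (hp : p ∈ S) : p.1 ≤ flatten S hS :=
  ⟨Set.subset_biUnion_of_mem (u := fun q : (comp A B).T => q.1.U) hp,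
    Set.subset_biUnion_of_mem (u := fun q : (comp A B).T => q.1.V) hp⟩

theorem flatten_le {S : Set (comp A B).T} (hS : MI (comp A B) S) {s : Sync A B}
    (h : ∀ p ∈ S, p.1 ≤ s) : flatten S hS ≤ s :=
  ⟨Set.iUnion₂_subset fun p hp => (h p hp).1, Set.iUnion₂_subset fun p hp => (h p hp).2⟩

theorem mem_of_le_flatten (hA : IsContention A) (hB : IsContention B)
    {S : Set (comp A B).T} (hS : MI (comp A B) S) {p : (comp A B).T}
    (hp : p.1 ≤ flatten S hS) : p ∈ S := by
  obtain ⟨q, hq, hqp⟩ : ∃ q ∈ S, ¬ (Disjoint q.1.U p.1.U ∧ Disjoint q.1.V p.1.V) := by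
    by_contra! h
    refine p.2.1 ⟨(Disjoint.eq_bot_of_ge ?_ hp.1), (Disjoint.eq_bot_of_ge ?_ hp.2)⟩
    · exact Set.disjoint_iUnion₂_left.mpr fun q hq => (h q hq).1
    · exact Set.disjoint_iUnion₂_left.mpr fun q hq => (h q hq).2
  have hqS := le_flatten hS hq
  have hle := (q.2.disjoint_or_le hA hB (hS.unionU.mono (Set.union_subset hqS.1 hp.1))
    (hS.unionV.mono (Set.union_subset hqS.2 hp.2))).resolve_left hqp
  rwa [← Subtype.ext (q.2.eq_of_le p.2 hle)]

theorem mi_setOf_le (hA : IsContention A) (hB : IsContention B) (s : Sync A B) :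
    MI (comp A B) {p | p.1 ≤ s} := by
  intro p hp q hq hpq
  have hover : ¬ (Disjoint p.1.U q.1.U ∧ Disjoint p.1.V q.1.V) := by
    rintro ⟨hU, hV⟩
    rcases hpq with ⟨u, hu, u', hu', h⟩ | ⟨v, hv, v', hv', h⟩
    · obtain rfl := s.miU u (hp.1 hu) u' (hq.1 hu') h
      exact Set.disjoint_left.mp hU hu hu'
    · obtain rfl := s.miV v (hp.2 hv) v' (hq.2 hv') h
      exact Set.disjoint_left.mp hV hv hv'
  have hle := (p.2.disjoint_or_le hA hB (s.miU.mono (Set.union_subset hp.1 hq.1))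
    (s.miV.mono (Set.union_subset hp.2 hq.2))).resolve_left hover
  exact Subtype.ext (p.2.eq_of_le q.2 hle)

theorem flatten_setOf_le (hA : IsContention A) (hB : IsContention B) (s : Sync A B) :
    flatten {p | p.1 ≤ s} (mi_setOf_le hA hB s) = s := by
  set S : Set (comp A B).T := {p | p.1 ≤ s}
  have hS : unionU S ⊆ s.U ∧ unionV S ⊆ s.V := flatten_le (mi_setOf_le hA hB s) fun _ hp => hp
  let rest : Sync A B := ⟨s.U \ unionU S, s.V \ unionV S, s.miU.mono Set.sdiff_subset,
    s.miV.mono Set.sdiff_subset, by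
      rw [setTgt_diff hA (s.miU.mono (Set.union_subset subset_rfl hS.1)),
        setSrc_diff hB (s.miV.mono (Set.union_subset subset_rfl hS.2)), s.bd, setTgt_unionU]⟩
  -- an atom below `rest` would be a minimal synchronisation below `s` missing all of them
  rcases eq_bot_or_exists_atom_le rest with hrest | ⟨p, hp, hpr⟩
  · refine le_antisymm hS ⟨?_, ?_⟩
    · exact Set.sdiff_eq_empty.mp (congrArg Sync.U hrest)
    · exact Set.sdiff_eq_empty.mp (congrArg Sync.V hrest)
  · have hpS := le_flatten (mi_setOf_le hA hB s)
      (p := ⟨p, Sync.minimal_iff_isAtom.mpr hp⟩)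
      (hpr.trans ⟨Set.sdiff_subset, Set.sdiff_subset⟩)
    refine absurd (Sync.ext ?_ ?_) hp.1
    · exact Set.subset_eq_empty (fun u hu => (hpr.1 hu).2 (hpS.1 hu)) rfl
    · exact Set.subset_eq_empty (fun v hv => (hpr.2 hv).2 (hpS.2 hv)) rfl

def flattenIso (hA : IsContention A) (hB : IsContention B) :
    {S : Set (comp A B).T // MI (comp A B) S} ≃o Sync A B where
  toFun S := flatten S.1 S.2
  invFun s := ⟨{p | p.1 ≤ s}, mi_setOf_le hA hB s⟩
  left_inv S := Subtype.ext (Set.ext fun _ => ⟨mem_of_le_flatten hA hB S.2, le_flatten S.2⟩)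
  right_inv := flatten_setOf_le hA hB
  map_rel_iff' {S S'} :=
    ⟨fun h _ hp => mem_of_le_flatten hA hB S'.2 ((le_flatten S.2 hp).trans h),
      fun h => flatten_le S.2 fun _ hp => le_flatten S'.2 (h hp)⟩

end Composite

structure Sync3 {k l m n : ℕ} (M : NetB k l) (N : NetB l m) (O : NetB m n) where
  U : Set M.T
  V : Set N.T
  W : Set O.T
  miU : MI M U
  miV : MI N V
  miW : MI O W
  bdUV : setTgt M U = setSrc N V
  bdVW : setTgt N V = setSrc O W

namespace Sync3

variable {k l m n : ℕ} {M : NetB k l} {N : NetB l m} {O : NetB m n}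

@[ext]
theorem ext {z z' : Sync3 M N O} (hU : z.U = z'.U) (hV : z.V = z'.V) (hW : z.W = z'.W) :
    z = z' := by
  cases z; cases z'; simp_all

instance : PartialOrder (Sync3 M N O) :=
  PartialOrder.lift (fun z => (z.U, z.V, z.W)) fun _ _ h =>
    Sync3.ext (congrArg Prod.fst h) (congrArg (·.2.1) h) (congrArg (·.2.2) h)

instance : OrderBot (Sync3 M N O) where
  bot := ⟨∅, ∅, ∅, fun _ h => h.elim, fun _ h => h.elim, fun _ h => h.elim,
    by simp [setTgt, setSrc], by simp [setTgt, setSrc]⟩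
  bot_le z := ⟨Set.empty_subset _, Set.empty_subset _, Set.empty_subset _⟩

end Sync3

section Assoc

variable {k l m n : ℕ} {M : NetB k l} {N : NetB l m} {O : NetB m n}

def syncCompLeftIso (hM : IsContention M) (hN : IsContention N) :
    Sync (comp M N) O ≃o Sync3 M N O where
  toFun s := ⟨unionU s.U, unionV s.U, s.V, s.miU.unionU, s.miU.unionV, s.miV,
    setTgt_unionU s.U, (setTgt_comp s.U).symm.trans s.bd⟩
  invFun z :=
    have hflat := (flattenIso hM hN).apply_symm_apply ⟨z.U, z.V, z.miU, z.miV, z.bdUV⟩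
    ⟨_, z.W, ((flattenIso hM hN).symm _).2, z.miW, by
      rw [setTgt_comp, ← z.bdVW]; exact congrArg (setTgt N ·.V) hflat⟩
  left_inv s := Sync.ext
    (congrArg Subtype.val ((flattenIso hM hN).symm_apply_apply ⟨s.U, s.miU⟩)) rfl
  right_inv z := by
    have hflat := (flattenIso hM hN).apply_symm_apply ⟨z.U, z.V, z.miU, z.miV, z.bdUV⟩
    exact Sync3.ext (congrArg Sync.U hflat) (congrArg Sync.V hflat) rfl
  map_rel_iff' {s s'} := by
    have := (flattenIso hM hN).le_iff_le (x := ⟨s.U, s.miU⟩) (y := ⟨s'.U, s'.miU⟩)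
    exact ⟨fun ⟨hU, hV, hW⟩ => ⟨this.mp ⟨hU, hV⟩, hW⟩,
      fun ⟨hS, hW⟩ => ⟨(this.mpr hS).1, (this.mpr hS).2, hW⟩⟩

def syncCompRightIso (hN : IsContention N) (hO : IsContention O) :
    Sync M (comp N O) ≃o Sync3 M N O where
  toFun s := ⟨s.U, unionU s.V, unionV s.V, s.miU, s.miV.unionU, s.miV.unionV,
    s.bd.trans (setSrc_comp s.V), setTgt_unionU s.V⟩
  invFun z :=
    have hflat := (flattenIso hN hO).apply_symm_apply ⟨z.V, z.W, z.miV, z.miW, z.bdVW⟩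
    ⟨z.U, _, z.miU, ((flattenIso hN hO).symm _).2, by
      rw [setSrc_comp, z.bdUV]; exact congrArg (setSrc N ·.U) hflat.symm⟩
  left_inv s := Sync.ext rfl
    (congrArg Subtype.val ((flattenIso hN hO).symm_apply_apply ⟨s.V, s.miV⟩))
  right_inv z := by
    have hflat := (flattenIso hN hO).apply_symm_apply ⟨z.V, z.W, z.miV, z.miW, z.bdVW⟩
    exact Sync3.ext rfl (congrArg Sync.U hflat) (congrArg Sync.V hflat)
  map_rel_iff' {s s'} := by
    have := (flattenIso hN hO).le_iff_le (x := ⟨s.V, s.miV⟩) (y := ⟨s'.V, s'.miV⟩)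
    exact ⟨fun ⟨hU, hV, hW⟩ => ⟨hU, this.mp ⟨hV, hW⟩⟩,
      fun ⟨hU, hS⟩ => ⟨hU, (this.mpr hS).1, (this.mpr hS).2⟩⟩

end Assoc

def transitionsEquivAtoms {β : Type*} [PartialOrder β] [OrderBot β] {k l m : ℕ}
    {X : NetB k l} {Y : NetB l m} (e : Sync X Y ≃o β) : (comp X Y).T ≃ {z : β // IsAtom z} :=
  e.toEquiv.subtypeEquiv fun s => Sync.minimal_iff_isAtom.trans (e.isAtom_iff s).symm

theorem image_sumAssoc {α β γ : Type*} (x : Set α) (y : Set β) (z : Set γ) :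
    Equiv.sumAssoc α β γ '' (Sum.inl '' (Sum.inl '' x ∪ Sum.inr '' y) ∪ Sum.inr '' z) =
      Sum.inl '' x ∪ Sum.inr '' (Sum.inl '' y ∪ Sum.inr '' z) := by
  simp only [Set.image_union, Set.image_image, Equiv.sumAssoc_apply_inl_inl,
    Equiv.sumAssoc_apply_inl_inr, Equiv.sumAssoc_apply_inr, Set.union_assoc]

/-- composition along a common boundary is associative up to
isomorphism: `(M ; N) ; O ≅ M ; (N ; O)`. -/
theorem comp_assoc {k l m n : ℕ} (M : NetB k l) (N : NetB l m) (O : NetB m n)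
    (hM : IsContention M) (hN : IsContention N) (hO : IsContention O) :
    Iso (comp (comp M N) O) (comp M (comp N O)) := by
  let eL := transitionsEquivAtoms (syncCompLeftIso (O := O) hM hN)
  let eR := transitionsEquivAtoms (syncCompRightIso (M := M) hN hO)
  let e := eL.trans eR.symm
  have he : ∀ t, (eR (e t)).1 = (eL t).1 := fun t => congrArg Subtype.val (eR.apply_symm_apply _)
  have hU : ∀ t, (e t).1.U = unionU t.1.U := fun t => congrArg Sync3.U (he t)
  have hV : ∀ t, unionU (e t).1.V = unionV t.1.U := fun t => congrArg Sync3.V (he t)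
  have hW : ∀ t, unionV (e t).1.V = t.1.V := fun t => congrArg Sync3.W (he t)
  refine ⟨⟨Equiv.sumAssoc _ _ _, e, fun t => ?_, fun t => ?_, fun t => ?_, fun t => ?_,
    fun t u => ?_⟩⟩
  · change _ ∪ Sum.inr '' setPre (comp N O) _ = _ '' (Sum.inl '' setPre (comp M N) _ ∪ _)
    rw [setPre_comp, setPre_comp, hU, hV, hW]
    exact (image_sumAssoc _ _ _).symm
  · change _ ∪ Sum.inr '' setPost (comp N O) _ = _ '' (Sum.inl '' setPost (comp M N) _ ∪ _)
    rw [setPost_comp, setPost_comp, hU, hV, hW]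
    exact (image_sumAssoc _ _ _).symm
  · change setSrc M _ = setSrc (comp M N) _
    rw [hU, setSrc_comp]
  · change setTgt (comp N O) _ = setTgt O _
    rw [setTgt_comp, hW]
  · change _ ∨ setCon (comp N O) _ _ ↔ setCon (comp M N) _ _ ∨ _
    rw [setCon_comp, setCon_comp, hU, hU, hV, hV, hW, hW, or_assoc]

end NWB
end
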